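/- Let x, y ∈ ℂ^n with ‖x‖₂ = ‖y‖₂ = 1, y* x > 0 (real and positive), and (yx*)|_S ≠ 0; set L = (yx*)|_T. Then for every E ∈ S with ‖E‖_F = 1, Re( y* ( L − ⟨E, L⟩ E ) x ) ≥ 0, and equality holds if and only if E = μL for some μ ∈ ℂ with |μ| = 1. -/

import Mathlib

open Matrix Complex

/-- Membership in the subspace `S` of structured Toeplitz matrices with diagonal offsets in `D`. -/
def InToeplitzS (n : ℕ) (D : Finset ℤ) (M : Matrix (Fin n) (Fin n) ℂ) : Prop :=
  (∀ i j : Fin n, ((j : ℤ) - (i : ℤ)) ∉ D → M i j = 0) ∧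
  (∀ i j k l : Fin n, ((j : ℤ) - (i : ℤ)) = ((l : ℤ) - (k : ℤ)) → M i j = M k l)

/-- The diagonal-averaging map: orthogonal projection onto the structured Toeplitz subspace. -/
noncomputable def projS (n : ℕ) (D : Finset ℤ) (M : Matrix (Fin n) (Fin n) ℂ) :
    Matrix (Fin n) (Fin n) ℂ := fun i j =>
  if ((j : ℤ) - (i : ℤ)) ∈ D then
    (∑ k : Fin n, ∑ l : Fin n,
      if ((l : ℤ) - (k : ℤ)) = ((j : ℤ) - (i : ℤ)) then M k l else 0) /
      ((n - ((j : ℤ) - (i : ℤ)).natAbs : ℕ) : ℂ)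
  else 0

/-- Frobenius norm of a complex matrix. -/
noncomputable def frobNorm {n : ℕ} (M : Matrix (Fin n) (Fin n) ℂ) : ℝ :=
  Real.sqrt (∑ i : Fin n, ∑ j : Fin n, ‖M i j‖ ^ 2)

/-- Frobenius inner product `⟨A, B⟩ = trace (A* B)`. -/
noncomputable def frobInner {n : ℕ} (A B : Matrix (Fin n) (Fin n) ℂ) : ℂ :=
  (Aᴴ * B).trace

/-- Normalized projection `M|_T = M|_S / ‖M|_S‖_F`. -/
noncomputable def projT (n : ℕ) (D : Finset ℤ) (M : Matrix (Fin n) (Fin n) ℂ) :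
    Matrix (Fin n) (Fin n) ℂ :=
  (frobNorm (projS n D M))⁻¹ • projS n D M

/-- Euclidean norm of a complex vector. -/
noncomputable def euclNorm {n : ℕ} (x : Fin n → ℂ) : ℝ :=
  Real.sqrt (∑ k : Fin n, ‖x k‖ ^ 2)

/-- Spectral norm (operator 2-norm) of a complex matrix. -/
noncomputable def specNorm {n : ℕ} (M : Matrix (Fin n) (Fin n) ℂ) : ℝ :=
  ‖Matrix.toEuclideanCLM (𝕜 := ℂ) M‖

open Matrix Complex Finset

lemma diag_card (n : ℕ) (d : ℤ) (hd : d.natAbs < n) :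
    (Finset.univ.filter (fun p : Fin n × Fin n => ((p.2 : ℤ) - (p.1 : ℤ)) = d)).card
      = n - d.natAbs := by
  rw [← Finset.card_range (n - d.natAbs)]
  apply Finset.card_bij (fun (p : Fin n × Fin n) _ => (p.1 : ℕ) - (-d).toNat)
  · intro p hp
    simp only [Finset.mem_filter, Finset.mem_univ, true_and] at hp
    have h1 := p.1.isLt; have h2 := p.2.isLt
    simp only [Finset.mem_range]; omega
  · intro p hp q hq hpq
    simp only [Finset.mem_filter, Finset.mem_univ, true_and] at hp hq
    have h1 := p.1.isLt; have h2 := p.2.isLt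
    have h3 := q.1.isLt; have h4 := q.2.isLt
    ext
    · omega
    · omega
  · intro b hb
    simp only [Finset.mem_range] at hb
    refine ⟨(⟨b + (-d).toNat, by omega⟩, ⟨b + d.toNat, by omega⟩), ?_, ?_⟩
    · simp only [Finset.mem_filter, Finset.mem_univ, true_and]
      push_cast; omega
    · simp


noncomputable def matE {n : ℕ} (M : Matrix (Fin n) (Fin n) ℂ) :
    EuclideanSpace ℂ (Fin n × Fin n) :=
  (WithLp.equiv 2 _).symm (fun p => M p.1 p.2)

lemma matE_apply {n : ℕ} (M : Matrix (Fin n) (Fin n) ℂ) (p : Fin n × Fin n) :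
    matE M p = M p.1 p.2 := rfl

lemma matE_inj {n : ℕ} {A B : Matrix (Fin n) (Fin n) ℂ} (h : matE A = matE B) : A = B := by
  ext i j; exact congrArg (fun v => v (i, j)) h

lemma matE_smul {n : ℕ} (c : ℂ) (M : Matrix (Fin n) (Fin n) ℂ) :
    matE (c • M) = c • matE M := rfl

lemma matE_norm {n : ℕ} (M : Matrix (Fin n) (Fin n) ℂ) :
    ‖matE M‖ = frobNorm M := by
  rw [EuclideanSpace.norm_eq, frobNorm]
  congr 1
  rw [Fintype.sum_prod_type]
  rfl

lemma frobInner_entry {n : ℕ} (A B : Matrix (Fin n) (Fin n) ℂ) :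
    frobInner A B = ∑ p : Fin n × Fin n, (starRingEnd ℂ) (A p.1 p.2) * B p.1 p.2 := by
  rw [frobInner, Matrix.trace, Fintype.sum_prod_type]
  rw [Finset.sum_comm]
  simp [Matrix.mul_apply, Matrix.conjTranspose_apply, Matrix.diag]

lemma matE_inner {n : ℕ} (A B : Matrix (Fin n) (Fin n) ℂ) :
    (inner ℂ (matE A) (matE B) : ℂ) = frobInner A B := by
  rw [PiLp.inner_apply, frobInner_entry]
  exact Finset.sum_congr rfl fun p _ => mul_comm _ _

lemma projS_mem (n : ℕ) (D : Finset ℤ) (M : Matrix (Fin n) (Fin n) ℂ) :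
    InToeplitzS n D (projS n D M) := by
  constructor
  · intro i j hij
    simp only [projS, if_neg hij]
  · intro i j k l h
    simp only [projS, h]

lemma smul_mem {n : ℕ} {D : Finset ℤ} {M : Matrix (Fin n) (Fin n) ℂ} (c : ℂ)
    (h : InToeplitzS n D M) : InToeplitzS n D (c • M) := by
  refine ⟨fun i j hij => ?_, fun i j k l hh => ?_⟩
  · simp [Matrix.smul_apply, h.1 i j hij]
  · simp [Matrix.smul_apply, h.2 i j k l hh]

lemma frobInner_proj {n : ℕ} {D : Finset ℤ} (hD : ∀ d ∈ D, d.natAbs < n)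
    (M E : Matrix (Fin n) (Fin n) ℂ) (hE : InToeplitzS n D E) :
    frobInner M E = frobInner (projS n D M) E := by
  rw [frobInner_entry, frobInner_entry]
  have hmap : ∀ p : Fin n × Fin n, p ∈ (Finset.univ : Finset (Fin n × Fin n)) →
      ((p.2 : ℤ) - (p.1 : ℤ)) ∈ Finset.Icc (-(n : ℤ) + 1) ((n : ℤ) - 1) := by
    intro p _
    have h1 := p.1.isLt; have h2 := p.2.isLt
    simp only [Finset.mem_Icc]; omega
  rw [← Finset.sum_fiberwise_of_maps_to hmap, ← Finset.sum_fiberwise_of_maps_to hmap]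
  apply Finset.sum_congr rfl
  intro d hd
  by_cases hdD : d ∈ D
  swap
  · -- E vanishes on this fiber
    apply Finset.sum_congr rfl
    intro p hp
    simp only [Finset.mem_filter, Finset.mem_univ, true_and] at hp
    rw [hE.1 p.1 p.2 (hp ▸ hdD), mul_zero, mul_zero]
  · -- constant fiber
    have hdn : d.natAbs < n := hD d hdD
    set fib := Finset.univ.filter (fun p : Fin n × Fin n => ((p.2 : ℤ) - (p.1 : ℤ)) = d) with hfib
    have hcard : fib.card = n - d.natAbs := diag_card n d hdn
    have hne : fib.Nonempty := by
      rw [← Finset.card_pos, hcard]; omega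
    obtain ⟨p₀, hp₀⟩ := hne
    have hp₀' : ((p₀.2 : ℤ) - (p₀.1 : ℤ)) = d := by
      simpa only [hfib, Finset.mem_filter, Finset.mem_univ, true_and] using hp₀
    set e := E p₀.1 p₀.2 with he
    have hEconst : ∀ p ∈ fib, E p.1 p.2 = e := by
      intro p hp
      have hp' : ((p.2 : ℤ) - (p.1 : ℤ)) = d := by
        simpa only [hfib, Finset.mem_filter, Finset.mem_univ, true_and] using hp
      exact hE.2 p.1 p.2 p₀.1 p₀.2 (hp'.trans hp₀'.symm)
    set Sd : ℂ := ∑ p ∈ fib, M p.1 p.2 with hSd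
    have hc : ((n - d.natAbs : ℕ) : ℂ) ≠ 0 := by
      simp only [ne_eq, Nat.cast_eq_zero]; omega
    have hPval : ∀ p ∈ fib, projS n D M p.1 p.2 = Sd / ((n - d.natAbs : ℕ) : ℂ) := by
      intro p hp
      have hp' : ((p.2 : ℤ) - (p.1 : ℤ)) = d := by
        simpa only [hfib, Finset.mem_filter, Finset.mem_univ, true_and] using hp
      simp only [projS, hp', if_pos hdD]
      congr 1
      rw [hSd, hfib, Finset.sum_filter, Fintype.sum_prod_type]
    symm
    calc ∑ p ∈ fib, (starRingEnd ℂ) (projS n D M p.1 p.2) * E p.1 p.2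
        = ∑ p ∈ fib, (starRingEnd ℂ) (Sd / ((n - d.natAbs : ℕ) : ℂ)) * e := by
          apply Finset.sum_congr rfl
          intro p hp; rw [hPval p hp, hEconst p hp]
      _ = (fib.card : ℂ) * ((starRingEnd ℂ) (Sd / ((n - d.natAbs : ℕ) : ℂ)) * e) := by
          rw [Finset.sum_const, nsmul_eq_mul]
      _ = (starRingEnd ℂ) Sd * e := by
          rw [hcard, map_div₀]
          have : (starRingEnd ℂ) ((n - d.natAbs : ℕ) : ℂ) = ((n - d.natAbs : ℕ) : ℂ) := by
            simp
          rw [this]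
          field_simp
      _ = ∑ p ∈ fib, (starRingEnd ℂ) (M p.1 p.2) * E p.1 p.2 := by
          rw [hSd, map_sum, Finset.sum_mul]
          apply Finset.sum_congr rfl
          intro p hp; rw [hEconst p hp]

lemma frobInner_sub_right {n : ℕ} (A B C : Matrix (Fin n) (Fin n) ℂ) :
    frobInner A (B - C) = frobInner A B - frobInner A C := by
  simp only [frobInner_entry, Matrix.sub_apply, mul_sub, Finset.sum_sub_distrib]

lemma frobInner_smul_right {n : ℕ} (c : ℂ) (A B : Matrix (Fin n) (Fin n) ℂ) :
    frobInner A (c • B) = c * frobInner A B := by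
  simp only [frobInner_entry, Matrix.smul_apply, smul_eq_mul, Finset.mul_sum]
  exact Finset.sum_congr rfl fun p _ => by ring

lemma frobInner_smul_left {n : ℕ} (c : ℂ) (A B : Matrix (Fin n) (Fin n) ℂ) :
    frobInner (c • A) B = (starRingEnd ℂ) c * frobInner A B := by
  simp only [frobInner_entry, Matrix.smul_apply, smul_eq_mul, Finset.mul_sum]
  exact Finset.sum_congr rfl fun p _ => by rw [RingHom.map_mul]; ring

lemma dot_eq_frobInner {n : ℕ} (x y : Fin n → ℂ) (A : Matrix (Fin n) (Fin n) ℂ) :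
    (star y) ⬝ᵥ (A *ᵥ x) = frobInner (vecMulVec y (star x)) A := by
  rw [frobInner_entry, Fintype.sum_prod_type]
  simp only [dotProduct, Matrix.mulVec, Pi.star_apply, Matrix.vecMulVec_apply,
    Finset.mul_sum, dotProduct]
  apply Finset.sum_congr rfl
  intro i _
  apply Finset.sum_congr rfl
  intro j _
  simp only [RCLike.star_def]
  rw [map_mul (starRingEnd ℂ), Complex.conj_conj]
  ring

/-- Monotonicity core: with `‖x‖₂ = ‖y‖₂ = 1`, `y* x` real and positive, `L = (yx*)|_T ≠ 0`,
for every structured `E` with `‖E‖_F = 1` one has `Re( y* (L − ⟨E,L⟩E) x ) ≥ 0`, with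
equality iff `E = μL` for some unimodular `μ`. -/
theorem monotonicity_core {n : ℕ} (hn : 2 ≤ n) (D : Finset ℤ)
    (hDne : D.Nonempty) (hDsub : D ⊆ Finset.Icc (-((n : ℤ) - 1)) ((n : ℤ) - 1))
    (x y : Fin n → ℂ)
    (hx : euclNorm x = 1) (hy : euclNorm y = 1)
    (hyx_im : ((star y) ⬝ᵥ x).im = 0) (hyx_re : 0 < ((star y) ⬝ᵥ x).re)
    (hproj : projS n D (vecMulVec y (star x)) ≠ 0)
    (E : Matrix (Fin n) (Fin n) ℂ) (hE : InToeplitzS n D E) (hEn : frobNorm E = 1) :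
    0 ≤ ((star y) ⬝ᵥ
        (((projT n D (vecMulVec y (star x)) -
          frobInner E (projT n D (vecMulVec y (star x))) • E)) *ᵥ x)).re ∧
    (((star y) ⬝ᵥ
        (((projT n D (vecMulVec y (star x)) -
          frobInner E (projT n D (vecMulVec y (star x))) • E)) *ᵥ x)).re = 0 ↔
      ∃ μ : ℂ, ‖μ‖ = 1 ∧ E = μ • projT n D (vecMulVec y (star x))) := by
  classical
  set M := vecMulVec y (star x) with hM
  set P := projS n D M with hPdef
  set r := frobNorm P with hr
  set L := projT n D M with hLdef
  set c := frobInner E L with hc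
  have hD' : ∀ d ∈ D, d.natAbs < n := by
    intro d hd
    have := hDsub hd
    simp only [Finset.mem_Icc] at this
    omega
  have hrpos : 0 < r := by
    rw [hr, ← matE_norm, norm_pos_iff]
    intro h
    exact hproj (matE_inj (h.trans (rfl : (0 : EuclideanSpace ℂ (Fin n × Fin n)) = matE 0)))
  have hrne : (r : ℂ) ≠ 0 := by
    exact_mod_cast hrpos.ne'
  have hPmem := projS_mem n D M
  have hLC : L = ((r : ℂ))⁻¹ • P := by
    rw [hLdef, projT, ← hPdef, ← hr]
    ext i j
    simp [Matrix.smul_apply, Complex.real_smul, Complex.ofReal_inv]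
  have hPL : P = (r : ℂ) • L := by
    rw [hLC, smul_smul, mul_inv_cancel₀ hrne, one_smul]
  have hLmem : InToeplitzS n D L := hLC ▸ smul_mem _ hPmem
  have hPP : frobInner P P = ((r : ℝ) : ℂ) ^ 2 := by
    rw [← matE_inner, inner_self_eq_norm_sq_to_K, matE_norm, ← hr]
    norm_cast
  have hnormL : ‖matE L‖ = 1 := by
    rw [hLC, matE_smul, norm_smul, matE_norm, ← hr, norm_inv, Complex.norm_real,
      Real.norm_of_nonneg hrpos.le]
    field_simp
  have hnormE : ‖matE E‖ = 1 := by rw [matE_norm, hEn]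
  have hML : frobInner M L = (r : ℂ) := by
    rw [frobInner_proj hD' M L hLmem, ← hPdef, hLC, frobInner_smul_right, hPP, sq,
      inv_mul_cancel_left₀ hrne]
  have hME : frobInner M E = (r : ℂ) * (starRingEnd ℂ) c := by
    rw [frobInner_proj hD' M E hE, ← hPdef]
    have h1 : frobInner P E = (starRingEnd ℂ) (frobInner E P) := by
      rw [← matE_inner, ← matE_inner, ← inner_conj_symm]
    rw [h1, hPL, frobInner_smul_right, ← hc, RingHom.map_mul, Complex.conj_ofReal]
  have hX : ((star y) ⬝ᵥ ((L - c • E) *ᵥ x)) = ((r * (1 - Complex.normSq c) : ℝ) : ℂ) := by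
    rw [dot_eq_frobInner, ← hM, frobInner_sub_right, frobInner_smul_right, hML, hME]
    have : (r : ℂ) - c * ((r : ℂ) * (starRingEnd ℂ) c)
        = (r : ℂ) * (1 - c * (starRingEnd ℂ) c) := by ring
    rw [this, Complex.mul_conj]
    push_cast
    ring
  have hXre : ((star y) ⬝ᵥ ((L - c • E) *ᵥ x)).re = r * (1 - Complex.normSq c) := by
    rw [hX, Complex.ofReal_re]
  have hcinner : c = inner ℂ (matE E) (matE L) := by
    rw [hc, ← matE_inner]
  have hcle : ‖c‖ ≤ 1 := by
    rw [hcinner]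
    calc ‖(inner ℂ (matE E) (matE L) : ℂ)‖ ≤ ‖matE E‖ * ‖matE L‖ := norm_inner_le_norm _ _
      _ = 1 := by rw [hnormE, hnormL, one_mul]
  have hnsq : Complex.normSq c = ‖c‖ ^ 2 := by
    rw [Complex.sq_norm]
  constructor
  · rw [hXre]
    apply mul_nonneg hrpos.le
    rw [hnsq]
    nlinarith [norm_nonneg c]
  · rw [hXre]
    constructor
    · intro h0
      have hcnorm : ‖c‖ = 1 := by
        have h1 : 1 - Complex.normSq c = 0 := by
          rcases mul_eq_zero.mp h0 with h | h
          · exact absurd h hrpos.ne'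
          · exact h
        rw [hnsq] at h1
        nlinarith [norm_nonneg c]
      have hE0 : matE E ≠ 0 := by
        intro h
        rw [h, norm_zero] at hnormE
        norm_num at hnormE
      have hL0 : matE L ≠ 0 := by
        intro h
        rw [h, norm_zero] at hnormL
        norm_num at hnormL
      have heq : ‖(inner ℂ (matE E) (matE L) : ℂ)‖ = ‖matE E‖ * ‖matE L‖ := by
        rw [← hcinner, hcnorm, hnormE, hnormL, one_mul]
      obtain ⟨t, ht0, htL⟩ := (norm_inner_eq_norm_iff hE0 hL0).mp heq
      have hLE : L = t • E := by
        apply matE_inj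
        rw [matE_smul, htL]
      have ht1 : ‖t‖ = 1 := by
        have : ‖matE L‖ = ‖t‖ * ‖matE E‖ := by rw [htL, norm_smul]
        rw [hnormL, hnormE, mul_one] at this
        exact this.symm
      refine ⟨t⁻¹, by rw [norm_inv, ht1, inv_one], ?_⟩
      rw [hLE, smul_smul, inv_mul_cancel₀ ht0, one_smul]
    · rintro ⟨μ, hμ, hEμ⟩
      have hLL : frobInner L L = 1 := by
        rw [← matE_inner, inner_self_eq_norm_sq_to_K, hnormL]
        norm_num
      have hcval : c = (starRingEnd ℂ) μ := by
        rw [hc, hEμ, frobInner_smul_left, hLL, mul_one]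
      rw [hcval]
      have : Complex.normSq ((starRingEnd ℂ) μ) = 1 := by
        rw [Complex.normSq_conj, ← Complex.sq_norm]
        have : ‖μ‖ = 1 := hμ
        rw [this]; norm_num
      rw [this]
      ring
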